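/- Let A be a base of a matroid M, let b ∉ A with a ∈ C(A,b), so that A' = A - a + b is a base. Then for any b' ∉ A with b' ≠ b and b' ∉ A': b ∈ C(A',b') if and only if a ∈ C(A,b'). -/

import Mathlib

open Set

/-- A circuit of a matroid: a minimal dependent set. -/
def IsCircuitOf {α : Type*} (M : Matroid α) (C : Set α) : Prop :=
  M.Dep C ∧ ∀ D, D ⊂ C → ¬ M.Dep D

/-- The support `C(I,x)` of `x` in `I`: the set of elements of `I` lying in a circuit
contained in `insert x I` and containing `x` (for a base `I` and `x ∉ I` with `insert x I`
dependent this is the fundamental circuit of `x` with respect to `I`, minus `x`). -/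
def suppOf {α : Type*} (M : Matroid α) (I : Set α) (x : α) : Set α :=
  {y ∈ I | ∃ C ⊆ insert x I, IsCircuitOf M C ∧ x ∈ C ∧ y ∈ C}

/-! For a base `B` and `x ∉ B`, the support `C(B,x)` is the set of `y ∈ B` such that
`B - y + x` is independent, because the only circuit inside `B + x` is the fundamental one.
With `A' = A - a + b`, both `b ∈ C(A',b')` and `a ∈ C(A,b')` then say that `A - a + b'` is
independent. -/

open Matroid

section

variable {α : Type*} {M : Matroid α} {B I C : Set α} {x y : α}

lemma isCircuitOf_iff_isCircuit : IsCircuitOf M C ↔ M.IsCircuit C := by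
  refine ⟨fun ⟨hC, hmin⟩ ↦ isCircuit_iff_forall_ssubset.2 ⟨hC, fun D hD ↦ ?_⟩,
    fun hC ↦ ⟨hC.dep, fun D hD ↦ (hC.ssubset_indep hD).not_dep⟩⟩
  exact (not_dep_iff (hD.subset.trans hC.subset_ground)).1 (hmin D hD)

lemma Matroid.Indep.mem_suppOf_iff (hI : M.Indep I) (hxcl : x ∈ M.closure I) (hxI : x ∉ I) :
    y ∈ suppOf M I x ↔ y ∈ I ∧ y ∈ M.fundCircuit x I := by
  simp only [suppOf, mem_ofPred_eq, isCircuitOf_iff_isCircuit]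
  refine and_congr_right fun _ ↦ ⟨?_, fun hy ↦ ?_⟩
  · rintro ⟨C, hCI, hC, -, hyC⟩
    rwa [← hC.eq_fundCircuit_of_subset hI hCI]
  · exact ⟨_, M.fundCircuit_subset_insert x I, hI.fundCircuit_isCircuit hxcl hxI,
      M.mem_fundCircuit x I, hy⟩

lemma Matroid.IsBase.mem_suppOf_iff (hB : M.IsBase B) (hxB : x ∉ B) :
    y ∈ suppOf M B x ↔ y ∈ B ∧ M.Indep (insert x B \ {y}) := by
  by_cases hxE : x ∈ M.E
  · have hxcl : x ∈ M.closure B := by rwa [hB.closure_eq]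
    rw [hB.indep.mem_suppOf_iff hxcl hxB, hB.indep.mem_fundCircuit_iff hxcl hxB]
  refine ⟨fun ⟨_, C, _, hC, hxC, _⟩ ↦ ?_, fun ⟨hyB, hind⟩ ↦ ?_⟩
  · exact (hxE ((isCircuitOf_iff_isCircuit.1 hC).subset_ground hxC)).elim
  · have hxy : x ≠ y := fun h ↦ hxB (h ▸ hyB)
    exact (hxE (hind.subset_ground ⟨mem_insert x B, hxy⟩)).elim

end

theorem supp_transfer_after_exchange {α : Type*} (M : Matroid α) (A : Set α) (a b : α)
    (hA : M.IsBase A) (hbA : b ∉ A) (ha : a ∈ suppOf M A b)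
    (b' : α) (hb'A : b' ∉ A) (hb'b : b' ≠ b) (hb'A' : b' ∉ insert b (A \ {a})) :
    b ∈ suppOf M (insert b (A \ {a})) b' ↔ a ∈ suppOf M A b' := by
  obtain ⟨haA, hexch⟩ := (hA.mem_suppOf_iff hbA).1 ha
  have hab : a ≠ b := fun h ↦ hbA (h ▸ haA)
  have hA' : M.IsBase (insert b (A \ {a})) := by
    rw [insert_sdiff_singleton_comm hab.symm]
    exact hA.exchange_isBase_of_indep' haA hbA hexch
  have hsame : insert b' (insert b (A \ {a})) \ {b} = insert b' A \ {a} := by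
    ext z
    grind
  rw [hA'.mem_suppOf_iff hb'A', hA.mem_suppOf_iff hb'A, hsame]
  simp only [mem_insert, haA, true_and]
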